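/- arXiv:1502.04781 — 3 statements merged into one kernel-verified Lean document; each statement's English description precedes it below -/
import Mathlib

section
/- Let p > 1, and let G ∈ C²([0,T)) satisfy G''(t) ≥ A e^{-b₁(t+R)} G(t)^p for t > 0, G(0) > 0, G'(0) > 0, where A, b₁, R > 0. Then for all t ≥ 0, (1/2) G'(t)² ≥ (A/(p+1)) e^{-b₁(t+R)} (G(t)^{p+1} − G(0)^{p+1}) + (1/2) G'(0)². -/
open Real Set

/-! Along the trajectory `G` and `G'` stay positive: as long as `G > 0` the inequality forces
`G'' ≥ 0`, so `G' ≥ G'(0) > 0` and `G ≥ G(0) > 0`, and a continuity argument at the first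
zero of `G'` shows this never breaks down. With `w(t) = A e^{-b₁(t+R)}`, the energy
`E = G'²/2 - w/(p+1) · (G^{p+1} - G(0)^{p+1})` then has
`E' = G'(G'' - w G^p) - w'/(p+1) · (G^{p+1} - G(0)^{p+1}) ≥ 0`, because `w` is decreasing and
`G ≥ G(0)`; so `E(t) ≥ E(0) = G'(0)²/2`. -/

theorem ContinuousOn.forall_Icc_pos_of_forall_Ico_pos {g : ℝ → ℝ} {a b : ℝ}
    (hg : ContinuousOn g (Icc a b)) (ha : 0 < g a)
    (step : ∀ s ∈ Ioc a b, (∀ u ∈ Ico a s, 0 < g u) → 0 < g s) :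
    ∀ s ∈ Icc a b, 0 < g s := by
  by_contra! hneg
  obtain ⟨s₁, hs₁, hgs₁⟩ := hneg
  set B := Icc a b ∩ g ⁻¹' Iic 0
  have hB : IsClosed B := hg.preimage_isClosed_of_isClosed isClosed_Icc isClosed_Iic
  have hBbdd : BddBelow B := ⟨a, fun x hx => hx.1.1⟩
  have ht₀ : sInf B ∈ B := hB.csInf_mem ⟨s₁, hs₁, hgs₁⟩ hBbdd
  have ht₀a : a < sInf B :=
    ht₀.1.1.lt_of_ne fun h => (h ▸ ht₀.2 : g a ≤ 0).not_gt ha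
  have hbefore : ∀ u ∈ Ico a (sInf B), 0 < g u := fun u hu =>
    not_le.1 fun hgu => (csInf_le hBbdd ⟨⟨hu.1, hu.2.le.trans ht₀.1.2⟩, hgu⟩).not_gt hu.2
  exact (step _ ⟨ht₀a, ht₀.1.2⟩ hbefore).not_ge ht₀.2

theorem deriv_pos_of_deriv_deriv_nonneg_of_pos {G : ℝ → ℝ} {T : ℝ}
    (hG : Differentiable ℝ G) (hG' : Differentiable ℝ (deriv G))
    (hG0 : 0 < G 0) (hG'0 : 0 < deriv G 0)
    (hG'' : ∀ s ∈ Ioo 0 T, 0 < G s → 0 ≤ deriv (deriv G) s) :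
    ∀ t ∈ Ico 0 T, 0 < deriv G t := by
  intro t ht
  refine hG'.continuous.continuousOn.forall_Icc_pos_of_forall_Ico_pos hG'0 ?_ t
    ⟨ht.1, le_rfl⟩
  intro s hs hpos
  have hGmono : MonotoneOn G (Icc 0 s) :=
    monotoneOn_of_deriv_nonneg (convex_Icc 0 s) hG.continuous.continuousOn
      hG.differentiableOn fun x hx => by
        rw [interior_Icc] at hx
        exact (hpos x ⟨hx.1.le, hx.2⟩).le
  have hG'mono : MonotoneOn (deriv G) (Icc 0 s) :=
    monotoneOn_of_deriv_nonneg (convex_Icc 0 s) hG'.continuous.continuousOn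
      hG'.differentiableOn fun x hx => by
        rw [interior_Icc] at hx
        refine hG'' x ⟨hx.1, hx.2.trans (hs.2.trans_lt ht.2)⟩ ?_
        exact hG0.trans_le (hGmono (left_mem_Icc.2 hs.1.le) ⟨hx.1.le, hx.2.le⟩ hx.1.le)
  exact hG'0.trans_le (hG'mono (left_mem_Icc.2 hs.1.le) (right_mem_Icc.2 hs.1.le) hs.1.le)

theorem monotoneOn_energy {G w : ℝ → ℝ} {p t : ℝ} (hp : -1 < p)
    (hG : Differentiable ℝ G) (hG' : Differentiable ℝ (deriv G)) (hw : Differentiable ℝ w)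
    (hG0 : 0 < G 0) (hG'_nonneg : ∀ s ∈ Ioo 0 t, 0 ≤ deriv G s)
    (hw' : ∀ s ∈ Ioo 0 t, deriv w s ≤ 0)
    (hG'' : ∀ s ∈ Ioo 0 t, w s * G s ^ p ≤ deriv (deriv G) s) :
    MonotoneOn (fun s => deriv G s ^ 2 / 2 - w s / (p + 1) * (G s ^ (p + 1) - G 0 ^ (p + 1)))
      (Icc 0 t) := by
  have hp1 : 0 < p + 1 := by linarith
  have hGmono : MonotoneOn G (Icc 0 t) :=
    monotoneOn_of_deriv_nonneg (convex_Icc 0 t) hG.continuous.continuousOn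
      hG.differentiableOn fun x hx => by
        rw [interior_Icc] at hx
        exact hG'_nonneg x hx
  have hG0le : ∀ s ∈ Icc 0 t, G 0 ≤ G s := fun s hs =>
    hGmono (left_mem_Icc.2 (hs.1.trans hs.2)) hs hs.1
  have hderiv : ∀ s ∈ Ioo 0 t, HasDerivAt
      (fun s => deriv G s ^ 2 / 2 - w s / (p + 1) * (G s ^ (p + 1) - G 0 ^ (p + 1)))
      (deriv G s * (deriv (deriv G) s - w s * G s ^ p)
        - deriv w s / (p + 1) * (G s ^ (p + 1) - G 0 ^ (p + 1))) s := by
    intro s hs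
    have hGs : G s ≠ 0 := (hG0.trans_le (hG0le s ⟨hs.1.le, hs.2.le⟩)).ne'
    have hpow := ((hG s).hasDerivAt.rpow_const (p := p + 1) (Or.inl hGs)).sub_const (G 0 ^ (p + 1))
    refine (((hG' s).hasDerivAt.pow 2).div_const 2 |>.sub
      (((hw s).hasDerivAt.div_const (p + 1)).mul hpow)).congr_deriv ?_
    rw [add_sub_cancel_right]
    field_simp
    ring
  refine monotoneOn_of_deriv_nonneg (convex_Icc 0 t) ?_ ?_ ?_
  · refine ((hG'.continuous.pow 2).div_const 2).continuousOn.sub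
      ((hw.continuous.div_const (p + 1)).continuousOn.mul
        ((hG.continuous.continuousOn.rpow_const fun x _ => Or.inr hp1.le).sub continuousOn_const))
  · rw [interior_Icc]
    exact fun s hs => (hderiv s hs).differentiableAt.differentiableWithinAt
  · rw [interior_Icc]
    intro s hs
    rw [(hderiv s hs).deriv]
    have hgap : 0 ≤ G s ^ (p + 1) - G 0 ^ (p + 1) := sub_nonneg.2 <|
      rpow_le_rpow hG0.le (hG0le s ⟨hs.1.le, hs.2.le⟩) hp1.le
    have hw'_div : deriv w s / (p + 1) ≤ 0 := div_nonpos_of_nonpos_of_nonneg (hw' s hs) hp1.le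
    nlinarith [mul_nonneg (hG'_nonneg s hs) (sub_nonneg.2 (hG'' s hs)),
      mul_nonneg (neg_nonneg.2 hw'_div) hgap]

theorem stmt_1_general (p A b₁ R T : ℝ) (hp : 1 < p) (hA : 0 < A) (hb : 0 < b₁)
    (G : ℝ → ℝ) (hG : ContDiff ℝ 2 G)
    (hG'' : ∀ t, 0 < t → t < T →
      deriv (deriv G) t ≥ A * Real.exp (-b₁ * (t + R)) * G t ^ p)
    (hG0 : 0 < G 0) (hG'0 : 0 < deriv G 0) :
    ∀ t, 0 ≤ t → t < T →
      (1 / 2) * (deriv G t) ^ 2 ≥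
        (A / (p + 1)) * Real.exp (-b₁ * (t + R)) * (G t ^ (p + 1) - G 0 ^ (p + 1))
          + (1 / 2) * (deriv G 0) ^ 2 := by
  intro t ht0 htT
  have hGd : Differentiable ℝ G := hG.differentiable two_ne_zero
  have hG'd : Differentiable ℝ (deriv G) :=
    ((contDiff_succ_iff_deriv (n := 1)).1 hG).2.2.differentiable one_ne_zero
  set w : ℝ → ℝ := fun s => A * exp (-b₁ * (s + R))
  have hw : ∀ s, HasDerivAt w (-b₁ * w s) s := fun s => by
    have := (((hasDerivAt_id s).add_const R).const_mul (-b₁)).exp.const_mul A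
    exact this.congr_deriv (by simp only [w, id, mul_one]; ring)
  have hG'pos := deriv_pos_of_deriv_deriv_nonneg_of_pos hGd hG'd hG0 hG'0 fun s hs hGs =>
    (by positivity : 0 ≤ w s * G s ^ p).trans (hG'' s hs.1 hs.2)
  have hE := monotoneOn_energy (w := w) (p := p) (t := t) (by linarith) hGd hG'd
    (fun s => (hw s).differentiableAt) hG0
    (fun s hs => (hG'pos s ⟨hs.1.le, hs.2.trans htT⟩).le)
    (fun s _ => (hw s).deriv ▸
      mul_nonpos_of_nonpos_of_nonneg (neg_nonpos.2 hb.le) (by positivity))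
    (fun s hs => hG'' s hs.1 (hs.2.trans htT))
    (left_mem_Icc.2 ht0) (right_mem_Icc.2 ht0) ht0
  simp only [sub_self, mul_zero, sub_zero, w] at hE
  rw [ge_iff_le, div_mul_eq_mul_div]
  linarith

theorem stmt_1 (p A b₁ R T : ℝ) (hp : 1 < p) (hA : 0 < A) (hb : 0 < b₁) (hR : 0 < R)
    (hT : 0 < T) (G : ℝ → ℝ) (hG : ContDiff ℝ 2 G)
    (hG'' : ∀ t, 0 < t → t < T →
      deriv (deriv G) t ≥ A * Real.exp (-b₁ * (t + R)) * G t ^ p)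
    (hG0 : 0 < G 0) (hG'0 : 0 < deriv G 0) :
    ∀ t, 0 ≤ t → t < T →
      (1 / 2) * (deriv G t) ^ 2 ≥
        (A / (p + 1)) * Real.exp (-b₁ * (t + R)) * (G t ^ (p + 1) - G 0 ^ (p + 1))
          + (1 / 2) * (deriv G 0) ^ 2 :=
  stmt_1_general p A b₁ R T hp hA hb G hG hG'' hG0 hG'0
end

section
/- Let p > 1, and let G ∈ C²([0,∞)) satisfy G''(t) ≥ A e^{-b₁(t+R)} G(t)^p for t > 0, G(0) > 0, G'(0) > 0, with A, b₁, R > 0. Then for all t ≥ G(0)/G'(0), G'(t) > (A/(p+1))^{1/2} e^{-(b₁/2)(t+R)} G(t)^{(p+1)/2}. -/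
/-!
Since `G'' ≥ 0` wherever `G > 0`, `G` is convex up to its first zero, hence stays above its
tangent line `G(0) + G'(0) t` and never vanishes; so `G' ≥ G'(0) > 0` and `G(t) ≥ 2 G(0)` for
`t ≥ G(0)/G'(0)`. With `w(t) = A e^{-b₁(t+R)}`, the energy
`E(t) = G'(t)² - 2/(p+1) · w(t) · (G(t)^{p+1} - G(0)^{p+1})`
is nondecreasing because `G'' ≥ w G^p` and `w` is decreasing. Hence
`G'(t)² ≥ E(0) + 2/(p+1) · w(t) · (G^{p+1} - G(0)^{p+1}) > w(t) G^{p+1}/(p+1)`,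
using `G(0)^{p+1} < G^{p+1}/2`, which holds because `G ≥ 2 G(0)` and `p + 1 > 1`.
-/

open Real Set

section

variable {G : ℝ → ℝ}

theorem add_deriv_mul_le_of_deriv_deriv_nonneg (hG : Differentiable ℝ G)
    (hG' : Differentiable ℝ (deriv G)) {a b : ℝ} (hab : a ≤ b)
    (hG'' : ∀ x ∈ Ioo a b, 0 ≤ deriv (deriv G) x) :
    G a + deriv G a * (b - a) ≤ G b := by
  rcases hab.eq_or_lt with rfl | hab
  · simp
  have hconv : ConvexOn ℝ (Icc a b) G :=
    convexOn_of_deriv2_nonneg (convex_Icc a b) hG.continuous.continuousOn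
      hG.differentiableOn hG'.differentiableOn (by simpa using hG'')
  have hslope := hconv.deriv_le_slope (left_mem_Icc.2 hab.le) (right_mem_Icc.2 hab.le) hab
    (hG a)
  rw [slope_def_field, le_div_iff₀ (sub_pos.2 hab)] at hslope
  linarith

theorem pos_of_deriv_deriv_nonneg_of_pos (hG : Differentiable ℝ G)
    (hG' : Differentiable ℝ (deriv G)) (hG'' : ∀ x > 0, 0 < G x → 0 ≤ deriv (deriv G) x)
    (h0 : 0 < G 0) (h'0 : 0 ≤ deriv G 0) {t : ℝ} (ht : 0 ≤ t) : 0 < G t := by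
  by_contra! hGt
  set S := Ici 0 ∩ {x | G x ≤ 0}
  have hSbdd : BddBelow S := ⟨0, fun x hx => hx.1⟩
  have hs : sInf S ∈ S :=
    (isClosed_Ici.inter (isClosed_le hG.continuous continuous_const)).csInf_mem ⟨t, ht, hGt⟩
      hSbdd
  have hs0 : 0 < sInf S := hs.1.lt_of_ne fun h => by
    rw [← h] at hs
    exact hs.2.not_gt h0
  have hbefore : ∀ x ∈ Ioo 0 (sInf S), 0 ≤ deriv (deriv G) x := fun x hx =>
    hG'' x hx.1 (not_le.1 fun hGx => (csInf_le hSbdd ⟨hx.1.le, hGx⟩).not_gt hx.2)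
  have htangent := add_deriv_mul_le_of_deriv_deriv_nonneg hG hG' hs0.le hbefore
  have hGs : G (sInf S) ≤ 0 := hs.2
  nlinarith [mul_nonneg h'0 hs0.le]

theorem deriv_deriv_nonneg_of_mul_rpow_le {w : ℝ → ℝ} {p : ℝ} (hG : Differentiable ℝ G)
    (hG' : Differentiable ℝ (deriv G)) (hw : ∀ x, 0 ≤ w x)
    (hG'' : ∀ x > 0, w x * G x ^ p ≤ deriv (deriv G) x) (h0 : 0 < G 0) (h'0 : 0 ≤ deriv G 0)
    {x : ℝ} (hx : 0 < x) : 0 ≤ deriv (deriv G) x :=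
  have hconv_of_pos (y : ℝ) (hy : 0 < y) (hGy : 0 < G y) : 0 ≤ deriv (deriv G) y :=
    (mul_nonneg (hw y) (rpow_nonneg hGy.le p)).trans (hG'' y hy)
  hconv_of_pos x hx (pos_of_deriv_deriv_nonneg_of_pos hG hG' hconv_of_pos h0 h'0 hx.le)

noncomputable def energy (G w : ℝ → ℝ) (p t : ℝ) : ℝ :=
  deriv G t ^ 2 - 2 / (p + 1) * w t * (G t ^ (p + 1) - G 0 ^ (p + 1))

theorem energy_zero (w : ℝ → ℝ) (p : ℝ) : energy G w p 0 = deriv G 0 ^ 2 := by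
  simp [energy]

theorem hasDerivAt_energy {w : ℝ → ℝ} {p t : ℝ} (hG : DifferentiableAt ℝ G t)
    (hG' : DifferentiableAt ℝ (deriv G) t) (hw : DifferentiableAt ℝ w t) (hp : p + 1 ≠ 0)
    (hGt : 0 < G t) :
    HasDerivAt (energy G w p)
      (2 * deriv G t * (deriv (deriv G) t - w t * G t ^ p)
        - 2 / (p + 1) * deriv w t * (G t ^ (p + 1) - G 0 ^ (p + 1))) t := by
  have hpow : HasDerivAt (fun x => G x ^ (p + 1)) (deriv G t * (p + 1) * G t ^ p) t := by
    simpa using hG.hasDerivAt.rpow_const (p := p + 1) (Or.inl hGt.ne')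
  refine HasDerivAt.congr_deriv (f := energy G w p) ((hG'.hasDerivAt.pow 2).sub
    ((hw.hasDerivAt.const_mul (2 / (p + 1))).mul (hpow.sub_const (G 0 ^ (p + 1))))) ?_
  field_simp
  push_cast
  ring

theorem monotoneOn_energy_s2 {w : ℝ → ℝ} {p : ℝ} (hG : Differentiable ℝ G)
    (hG' : Differentiable ℝ (deriv G)) (hw : Differentiable ℝ w) (hp : 0 < p + 1)
    (h0 : 0 < G 0) (hG_ge : ∀ x ≥ 0, G 0 ≤ G x) (hG'_nonneg : ∀ x > 0, 0 ≤ deriv G x)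
    (hG'' : ∀ x > 0, w x * G x ^ p ≤ deriv (deriv G) x) (hw' : ∀ x > 0, deriv w x ≤ 0) :
    MonotoneOn (energy G w p) (Ici 0) := by
  have hderiv : ∀ x ≥ 0, HasDerivAt (energy G w p) _ x := fun x hx =>
    hasDerivAt_energy (hG x) (hG' x) (hw x) hp.ne' (h0.trans_le (hG_ge x hx))
  refine monotoneOn_of_deriv_nonneg (convex_Ici 0)
    (HasDerivAt.continuousOn fun x hx => hderiv x hx)
    (fun x hx => (hderiv x (interior_subset hx)).differentiableAt.differentiableWithinAt)
    fun x hx => ?_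
  rw [interior_Ici] at hx
  have hx : 0 < x := hx
  rw [(hderiv x hx.le).deriv]
  have hgrowth : 0 ≤ G x ^ (p + 1) - G 0 ^ (p + 1) :=
    sub_nonneg.2 (rpow_le_rpow h0.le (hG_ge x hx.le) hp.le)
  have hforce : 0 ≤ 2 * deriv G x * (deriv (deriv G) x - w x * G x ^ p) :=
    mul_nonneg (mul_nonneg two_pos.le (hG'_nonneg x hx)) (sub_nonneg.2 (hG'' x hx))
  have hweight : 2 / (p + 1) * deriv w x * (G x ^ (p + 1) - G 0 ^ (p + 1)) ≤ 0 :=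
    mul_nonpos_of_nonpos_of_nonneg
      (mul_nonpos_of_nonneg_of_nonpos (by positivity) (hw' x hx)) hgrowth
  linarith

end

theorem two_mul_rpow_lt_rpow {q a b : ℝ} (hq : 1 < q) (ha : 0 < a) (hab : 2 * a ≤ b) :
    2 * a ^ q < b ^ q := by
  have htwo : (2 : ℝ) < 2 ^ q := by
    simpa using rpow_lt_rpow_of_exponent_lt one_lt_two hq
  calc 2 * a ^ q < 2 ^ q * a ^ q := mul_lt_mul_of_pos_right htwo (rpow_pos_of_pos ha _)
    _ = (2 * a) ^ q := (mul_rpow two_pos.le ha.le).symm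
    _ ≤ b ^ q := by gcongr

theorem lt_sq_deriv_of_energy_le {G w : ℝ → ℝ} {p t : ℝ} (hp : 0 < p) (hw : 0 ≤ w t)
    (h0 : 0 < G 0) (hGt : 2 * G 0 ≤ G t) (h'0 : deriv G 0 ≠ 0)
    (hE : energy G w p 0 ≤ energy G w p t) :
    w t / (p + 1) * G t ^ (p + 1) < deriv G t ^ 2 := by
  rw [energy_zero, energy] at hE
  have hsq : 0 < deriv G 0 ^ 2 := by positivity
  have hsurplus : 0 ≤ w t / (p + 1) * (G t ^ (p + 1) - 2 * G 0 ^ (p + 1)) :=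
    mul_nonneg (div_nonneg hw (by linarith)) (by linarith [two_mul_rpow_lt_rpow (by linarith : (1 : ℝ) < p + 1) h0 hGt])
  have hsplit : 2 / (p + 1) * w t * (G t ^ (p + 1) - G 0 ^ (p + 1))
      = w t / (p + 1) * G t ^ (p + 1) + w t / (p + 1) * (G t ^ (p + 1) - 2 * G 0 ^ (p + 1)) := by
    ring
  linarith

theorem sqrt_mul_exp_mul_rpow {a y : ℝ} (x q : ℝ) (ha : 0 ≤ a) (hy : 0 ≤ y) :
    √(a * exp x * y ^ q) = a ^ ((1 : ℝ) / 2) * exp (x / 2) * y ^ (q / 2) := by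
  rw [sqrt_mul (by positivity), sqrt_mul ha, exp_half, sqrt_eq_rpow a, sqrt_eq_rpow (y ^ q),
    ← rpow_mul hy, mul_one_div]

theorem stmt_2_general (p A b₁ R : ℝ) (hp : 1 < p) (hA : 0 < A) (hb : 0 < b₁)
    (G : ℝ → ℝ) (hG : ContDiff ℝ 2 G)
    (hG'' : ∀ t > (0:ℝ), deriv (deriv G) t ≥ A * Real.exp (-b₁ * (t + R)) * G t ^ p)
    (hG0 : 0 < G 0) (hG'0 : 0 < deriv G 0) :
    ∀ t ≥ G 0 / deriv G 0,
      deriv G t > (A / (p + 1)) ^ ((1:ℝ)/2) * Real.exp (-(b₁ / 2) * (t + R))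
        * G t ^ ((p + 1) / 2) := by
  intro t ht
  set w : ℝ → ℝ := fun x => A * exp (-b₁ * (x + R))
  have hw_nonneg : ∀ x, 0 ≤ w x := fun x => by positivity
  have hw_anti : Antitone w := fun x y hxy =>
    mul_le_mul_of_nonneg_left (exp_le_exp.2 (by nlinarith)) hA.le
  have hG₁ : Differentiable ℝ G := hG.differentiable two_ne_zero
  have hG₂ : Differentiable ℝ (deriv G) :=
    (contDiff_succ_iff_deriv.1 (hG : ContDiff ℝ (1 + 1) G)).2.2.differentiable one_ne_zero
  have hconv : ∀ x > 0, 0 ≤ deriv (deriv G) x := fun x =>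
    deriv_deriv_nonneg_of_mul_rpow_le hG₁ hG₂ hw_nonneg hG'' hG0 hG'0.le
  have htangent : ∀ x ≥ 0, G 0 + deriv G 0 * x ≤ G x := fun x hx => by
    simpa using add_deriv_mul_le_of_deriv_deriv_nonneg hG₁ hG₂ hx fun y hy => hconv y hy.1
  have hG'mono : MonotoneOn (deriv G) (Ici 0) :=
    monotoneOn_of_deriv_nonneg (convex_Ici 0) hG₂.continuous.continuousOn
      hG₂.differentiableOn (by simpa using hconv)
  have ht0 : 0 < t := (div_pos hG0 hG'0).trans_le ht
  have hE := monotoneOn_energy_s2 hG₁ hG₂ (by fun_prop) (by linarith) hG0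
    (fun x hx => by nlinarith [htangent x hx, mul_nonneg hG'0.le hx])
    (fun x hx => hG'0.le.trans (hG'mono self_mem_Ici hx.le hx.le)) hG''
    (fun x _ => hw_anti.deriv_nonpos) self_mem_Ici ht0.le ht0.le
  have hGt : 2 * G 0 ≤ G t := by
    rw [ge_iff_le, div_le_iff₀ hG'0] at ht
    linarith [htangent t ht0.le]
  have hkey := lt_sq_deriv_of_energy_le (by linarith) (hw_nonneg t) hG0 hGt hG'0.ne' hE
  rw [gt_iff_lt, show -(b₁ / 2) * (t + R) = -b₁ * (t + R) / 2 by ring,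
    ← sqrt_mul_exp_mul_rpow _ _ (by positivity) (by linarith), sqrt_lt' (hG'0.trans_le (hG'mono self_mem_Ici ht0.le ht0.le))]
  convert hkey using 2
  ring

theorem stmt_2 (p A b₁ R : ℝ) (hp : 1 < p) (hA : 0 < A) (hb : 0 < b₁) (hR : 0 < R)
    (G : ℝ → ℝ) (hG : ContDiff ℝ 2 G)
    (hG'' : ∀ t > (0:ℝ), deriv (deriv G) t ≥ A * Real.exp (-b₁ * (t + R)) * G t ^ p)
    (hG0 : 0 < G 0) (hG'0 : 0 < deriv G 0) :
    ∀ t ≥ G 0 / deriv G 0,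
      deriv G t > (A / (p + 1)) ^ ((1:ℝ)/2) * Real.exp (-(b₁ / 2) * (t + R))
        * G t ^ ((p + 1) / 2) :=
  stmt_2_general p A b₁ R hp hA hb G hG hG'' hG0 hG'0
end

section
/- Let p > 1 and b₁ − a₁(p−1) < 2 with b₁ > 0. Suppose G ∈ C²([0,T)) satisfies G(t) ≥ K t^{a₁} for t ≥ T₀, G''(t) ≥ A e^{-b₁(t+R)} |G(t)|^p for t > 0, and G(0) > 0, G'(0) > 0, where K, T₀, A, R are positive constants with T₀ ≥ R. Then there exists K₀ > 0 (depending only on a₁, b₁, A, p, R, T₀ but not on K) such that if K ≥ K₀, then T ≤ 2T₀; that is, G cannot exist as a C² solution of the above inequalities on [0, 2T₀]. -/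
open Real

/-- If `f'' ≥ M` on `(a,b)` and `f'(a) ≥ 0`, then `f b ≥ f a + M (b-a)²/2`. -/
lemma quad_below (f : ℝ → ℝ) (hf : Differentiable ℝ f) (hf' : Differentiable ℝ (deriv f))
    (a b M : ℝ) (hab : a ≤ b)
    (h'' : ∀ x ∈ Set.Ioo a b, M ≤ deriv (deriv f) x) (h' : 0 ≤ deriv f a) :
    f a + M * (b - a) ^ 2 / 2 ≤ f b := by
  have step1 : ∀ x ∈ Set.Icc a b, deriv f a + M * (x - a) ≤ deriv f x := by
    intro x hx
    have hmono : MonotoneOn (fun y => deriv f y - M * y) (Set.Icc a b) := by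
      apply monotoneOn_of_deriv_nonneg (convex_Icc a b)
      · exact (hf'.continuous.sub (continuous_const.mul continuous_id)).continuousOn
      · exact (hf'.sub (differentiable_id.const_mul M)).differentiableOn
      · intro y hy
        rw [interior_Icc] at hy
        have hD : HasDerivAt (fun y => deriv f y - M * y) (deriv (deriv f) y - M * 1) y :=
          ((hf' y).hasDerivAt).sub ((hasDerivAt_id y).const_mul M)
        rw [hD.deriv]
        have := h'' y hy
        linarith
    have := hmono (Set.left_mem_Icc.2 hab) hx hx.1
    simp only at this
    linarith
  have hmono2 : MonotoneOn
      (fun y => f y - deriv f a * y - M * (y - a) ^ 2 / 2) (Set.Icc a b) := by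
    apply monotoneOn_of_deriv_nonneg (convex_Icc a b)
    · exact ((hf.continuous.sub (continuous_const.mul continuous_id)).sub
        ((continuous_const.mul ((continuous_id.sub continuous_const).pow 2)).div_const 2)).continuousOn
    · exact ((hf.sub (differentiable_id.const_mul (deriv f a))).sub
        ((((differentiable_id.sub_const a).pow 2).const_mul M).div_const 2)).differentiableOn
    · intro y hy
      rw [interior_Icc] at hy
      have hD : HasDerivAt (fun y => f y - deriv f a * y - M * (y - a) ^ 2 / 2)
          (deriv f y - deriv f a * 1 - M * (2 * (y - a) ^ 1 * 1) / 2) y := by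
        exact (((hf y).hasDerivAt).sub ((hasDerivAt_id y).const_mul (deriv f a))).sub
          (((((hasDerivAt_id y).sub_const a).pow 2).const_mul M).div_const 2)
      rw [hD.deriv]
      have := step1 y ⟨hy.1.le, hy.2.le⟩
      nlinarith [this]
  have := hmono2 (Set.left_mem_Icc.2 hab) (Set.right_mem_Icc.2 hab) hab
  simp only at this
  nlinarith [mul_nonneg h' (sub_nonneg.2 hab)]

theorem stmt_3 (p a₁ b₁ A R T₀ : ℝ) (hp : 1 < p) (hb : 0 < b₁)
    (hexp : b₁ - a₁ * (p - 1) < 2) (hA : 0 < A) (hR : 0 < R) (hT₀ : T₀ ≥ R) :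
    ∃ K₀ > (0:ℝ), ∀ (K T : ℝ) (G : ℝ → ℝ), K ≥ K₀ → ContDiff ℝ 2 G →
      (∀ t, T₀ ≤ t → t < T → G t ≥ K * t ^ a₁) →
      (∀ t, 0 < t → t < T →
        deriv (deriv G) t ≥ A * Real.exp (-b₁ * (t + R)) * |G t| ^ p) →
      0 < G 0 → 0 < deriv G 0 → T ≤ 2 * T₀ := by
  have hp1 : 0 < p - 1 := by linarith
  have hT0 : 0 < T₀ := lt_of_lt_of_le hR hT₀
  set a : ℝ := (16:ℝ) ^ ((1:ℝ)/(p-1)) with ha_def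
  have ha1 : 1 < a := by
    rw [ha_def]
    exact Real.one_lt_rpow_iff_of_pos (by norm_num) |>.2 (Or.inl ⟨by norm_num, by positivity⟩)
  have ha0 : 0 < a := lt_trans one_pos ha1
  have hap : a ^ (p - 1) = 16 := by
    rw [ha_def, ← Real.rpow_mul (by norm_num : (0:ℝ) ≤ 16), one_div,
      inv_mul_cancel₀ hp1.ne', Real.rpow_one]
  set E : ℝ := Real.exp (-b₁ * (2 * T₀ + R)) with hE_def
  have hE : 0 < E := Real.exp_pos _
  set c : ℝ := A * E * T₀ ^ 2 / 8 with hc_def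
  have hc : 0 < c := by positivity
  have hTa : 0 < T₀ ^ a₁ := Real.rpow_pos_of_pos hT0 a₁
  set D : ℝ := (T₀ ^ a₁) ^ (p - 1) with hD_def
  have hD : 0 < D := Real.rpow_pos_of_pos hTa _
  refine ⟨max 1 ((a / (c * D)) ^ ((1:ℝ)/(p-1))), lt_of_lt_of_le one_pos (le_max_left _ _), ?_⟩
  intro K T G hK hG2 h1 h2 hG0 hG'0
  by_contra hT
  push_neg at hT
  have hK1 : (1:ℝ) ≤ K := le_trans (le_max_left _ _) hK
  have hKpos : 0 < K := lt_of_lt_of_le one_pos hK1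
  set B : ℝ := K * T₀ ^ a₁ with hB_def
  have hB : 0 < B := by positivity
  -- the key largeness condition
  have key : a ≤ c * B ^ (p - 1) := by
    have hq : 0 < a / (c * D) := by positivity
    have hx : (a / (c * D)) ^ ((1:ℝ)/(p-1)) ≤ K := le_trans (le_max_right _ _) hK
    have h5 : a / (c * D) ≤ K ^ (p - 1) := by
      calc a / (c * D) = ((a / (c * D)) ^ ((1:ℝ)/(p-1))) ^ (p - 1) := by
            rw [← Real.rpow_mul hq.le, one_div, inv_mul_cancel₀ hp1.ne', Real.rpow_one]
        _ ≤ K ^ (p - 1) := Real.rpow_le_rpow (Real.rpow_pos_of_pos hq _).le hx hp1.le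
    have hBp : B ^ (p - 1) = K ^ (p - 1) * D := by
      rw [hB_def, Real.mul_rpow hKpos.le hTa.le, hD_def]
    rw [hBp]
    rw [div_le_iff₀ (by positivity : (0:ℝ) < c * D)] at h5
    calc a ≤ K ^ (p - 1) * (c * D) := h5
      _ = c * (K ^ (p - 1) * D) := by ring
  -- smoothness
  have hG2' : ContDiff ℝ ((1:WithTop ℕ∞) + 1) G := hG2
  rw [contDiff_succ_iff_deriv] at hG2'
  obtain ⟨hdiff, -, hG1⟩ := hG2'
  have hdiff' : Differentiable ℝ (deriv G) := (contDiff_one_iff_deriv.1 hG1).1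
  have hcont : Continuous G := hdiff.continuous
  -- G' is monotone on [0, 2T₀]
  have hG''nn : ∀ x ∈ Set.Ioo (0:ℝ) (2*T₀), 0 ≤ deriv (deriv G) x := by
    intro x hx
    have := h2 x hx.1 (lt_trans hx.2 hT)
    have h0 : (0:ℝ) ≤ A * Real.exp (-b₁ * (x + R)) * |G x| ^ p := by positivity
    linarith
  have monoG' : MonotoneOn (deriv G) (Set.Icc 0 (2*T₀)) := by
    apply monotoneOn_of_deriv_nonneg (convex_Icc _ _) hdiff'.continuous.continuousOn
      hdiff'.differentiableOn
    rw [interior_Icc]; exact hG''nn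
  have hG'nn : ∀ x ∈ Set.Icc (0:ℝ) (2*T₀), 0 ≤ deriv G x := by
    intro x hx
    have := monoG' (Set.left_mem_Icc.2 (by linarith)) hx hx.1
    linarith
  have monoG : MonotoneOn G (Set.Icc 0 (2*T₀)) := by
    apply monotoneOn_of_deriv_nonneg (convex_Icc _ _) hcont.continuousOn hdiff.differentiableOn
    rw [interior_Icc]; exact fun x hx => hG'nn x ⟨hx.1.le, hx.2.le⟩
  -- dyadic times
  set t : ℕ → ℝ := fun n => 2 * T₀ - T₀ / 2 ^ n with ht_def
  have ht_mem : ∀ n, t n ∈ Set.Icc T₀ (2*T₀) := by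
    intro n
    have h2n : (1:ℝ) ≤ 2 ^ n := one_le_pow₀ (by norm_num)
    have h2n0 : (0:ℝ) < 2 ^ n := by positivity
    constructor
    · rw [ht_def]
      have : T₀ / 2 ^ n ≤ T₀ := div_le_self hT0.le h2n
      linarith
    · rw [ht_def]
      have : 0 < T₀ / 2 ^ n := by positivity
      linarith
  have ht_mono : ∀ n, t n ≤ t (n+1) := by
    intro n
    rw [ht_def]
    simp only
    have : T₀ / 2 ^ (n+1) ≤ T₀ / 2 ^ n := by
      apply div_le_div_of_nonneg_left hT0.le (by positivity)
      exact pow_le_pow_right₀ (by norm_num) (Nat.le_succ n)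
    linarith
  -- main claim
  have claim : ∀ n : ℕ, B * a ^ n ≤ G (t n) := by
    intro n
    induction n with
    | zero =>
      have ht0 : t 0 = T₀ := by show 2 * T₀ - T₀ / 2 ^ 0 = T₀; ring
      rw [ht0]
      have := h1 T₀ le_rfl (by linarith)
      simpa [hB_def] using this
    | succ n ih =>
      have hX : 0 < B * a ^ n := by positivity
      set M : ℝ := A * E * (B * a ^ n) ^ p with hM_def
      have hqb := quad_below G hdiff hdiff' (t n) (t (n+1)) M (ht_mono n) ?_ ?_
      · -- arithmetic
        have hdt : t (n+1) - t n = T₀ / 2 ^ (n+1) := by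
          rw [ht_def]
          simp only
          rw [pow_succ]
          field_simp
          ring
        rw [hdt] at hqb
        refine le_trans ?_ hqb
        -- show B * a^(n+1) ≤ G (t n) + M * (T₀/2^(n+1))^2 / 2
        have hXp : (B * a ^ n) ^ p = (B * a ^ n) * (B ^ (p-1) * 16 ^ n) := by
          have h1' : (B * a ^ n) ^ p = (B * a ^ n) ^ (1:ℝ) * (B * a ^ n) ^ (p-1) := by
            rw [← Real.rpow_add hX]; norm_num
          have han : ((a:ℝ) ^ n) ^ (p-1) = 16 ^ n := by
            rw [← Real.rpow_natCast a n, ← Real.rpow_mul ha0.le,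
              mul_comm (n:ℝ) (p-1), Real.rpow_mul ha0.le, hap, Real.rpow_natCast]
          rw [h1', Real.rpow_one, Real.mul_rpow hB.le (by positivity), han]
        have h16 : (16:ℝ) ^ n = 4 ^ n * 4 ^ n := by
          rw [← mul_pow]; norm_num
        have hsq : ((2:ℝ) ^ (n+1)) ^ 2 = 4 * 4 ^ n := by
          rw [← pow_mul, show (n+1)*2 = 2*(n+1) by ring, pow_mul]
          norm_num [pow_succ]
          ring
        have heq : M * (T₀ / 2 ^ (n+1)) ^ 2 / 2 = c * B ^ (p-1) * (B * a ^ n) * 4 ^ n := by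
          rw [hM_def, hXp, div_pow, hsq, hc_def, h16]
          field_simp
          ring
        rw [heq]
        have ih' : B * a ^ n ≤ G (t n) := ih
        have h4n : (1:ℝ) ≤ 4 ^ n := one_le_pow₀ (by norm_num)
        have step : a * (B * a ^ n) ≤ c * B ^ (p-1) * (B * a ^ n) * 4 ^ n := by
          calc a * (B * a ^ n) ≤ (c * B ^ (p-1)) * (B * a ^ n) :=
                mul_le_mul_of_nonneg_right key hX.le
            _ = (c * B ^ (p-1)) * (B * a ^ n) * 1 := by ring
            _ ≤ c * B ^ (p-1) * (B * a ^ n) * 4 ^ n := by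
                apply mul_le_mul_of_nonneg_left h4n
                positivity
        have : B * a ^ (n+1) = a * (B * a ^ n) := by ring
        rw [this]
        linarith
      · -- second derivative bound
        intro x hx
        have htn := ht_mem n
        have htn1 := ht_mem (n+1)
        have hx0 : 0 < x := lt_of_le_of_lt (le_trans hT0.le htn.1) hx.1
        have hx2T : x < 2 * T₀ := lt_of_lt_of_le hx.2 htn1.2
        have hxT : x < T := lt_trans hx2T hT
        have h2x := h2 x hx0 hxT
        have hGx : B * a ^ n ≤ G x := by
          refine le_trans ih ?_
          exact monoG ⟨le_trans hT0.le htn.1, htn.2⟩ ⟨by linarith [hx0], hx2T.le⟩ hx.1.le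
        have habs : B * a ^ n ≤ |G x| := le_trans hGx (le_abs_self _)
        have hexp_le : E ≤ Real.exp (-b₁ * (x + R)) := by
          rw [hE_def]
          apply Real.exp_le_exp.2
          nlinarith
        have hpow : (B * a ^ n) ^ p ≤ |G x| ^ p :=
          Real.rpow_le_rpow hX.le habs (by linarith)
        rw [hM_def]
        calc A * E * (B * a ^ n) ^ p ≤ A * Real.exp (-b₁ * (x + R)) * (B * a ^ n) ^ p := by
              apply mul_le_mul_of_nonneg_right (mul_le_mul_of_nonneg_left hexp_le hA.le)
              positivity
          _ ≤ A * Real.exp (-b₁ * (x + R)) * |G x| ^ p := by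
              apply mul_le_mul_of_nonneg_left hpow
              positivity
          _ ≤ deriv (deriv G) x := h2x
      · -- deriv nonneg at t n
        exact hG'nn (t n) ⟨le_trans hT0.le (ht_mem n).1, (ht_mem n).2⟩
  -- contradiction via boundedness
  obtain ⟨x₀, hx₀, hmax⟩ := isCompact_Icc.exists_isMaxOn
    (Set.nonempty_Icc.2 (by linarith : T₀ ≤ 2*T₀)) hcont.continuousOn
  obtain ⟨n, hn⟩ := pow_unbounded_of_one_lt (G x₀ / B) ha1
  have h6 : G x₀ < B * a ^ n := by
    rw [div_lt_iff₀ hB] at hn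
    linarith [hn]
  have h7 : G (t n) ≤ G x₀ := hmax (ht_mem n)
  have := claim n
  linarith
end
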